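/- arXiv:1104.2961 — 2 statements merged into one kernel-verified Lean document; each statement's English description precedes it below -/
import Mathlib

section
/- Let 0 < T < ∞, let a ≥ 0 and C be real constants, and let f : [0, T) → ℝ be differentiable with f'(t) ≥ a·log(T - t) - C - f(t) for all t ∈ [0, T). Then there exists a constant C' (depending only on a, C, T and f(0)) such that f(t) ≥ -C' for all t ∈ [0, T). -/
/-!
Subtracting the barrier `a · negMulLog (T - t) - C - 2a`, whose derivative is
`a (log (T - t) + 1)`, leaves a function `g` with `g + g' ≥ 0`, because `negMulLog ≤ 1` on `[0, ∞)`.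
Then `eᵗ g` is nondecreasing, so `g ≥ min 0 (g 0)`, while concavity of `negMulLog` bounds the
barrier below on `[0, T)` by `a · min 0 (negMulLog T) - C - 2a`.
-/

open Real Set

theorem monotoneOn_exp_mul_of_add_deriv_nonneg {s : Set ℝ} (hs : Convex ℝ s) {g g' : ℝ → ℝ}
    (hg : ∀ t ∈ s, HasDerivWithinAt g (g' t) s t) (hg' : ∀ t ∈ interior s, 0 ≤ g t + g' t) :
    MonotoneOn (fun t => exp t * g t) s := by
  refine monotoneOn_of_hasDerivWithinAt_nonneg hs
    (continuous_exp.continuousOn.mul fun t ht => (hg t ht).continuousWithinAt)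
    (fun t ht => ((hasDerivAt_exp t).hasDerivWithinAt.mul
      (hg t (interior_subset ht))).mono interior_subset) fun t ht => ?_
  rw [← mul_add]
  exact mul_nonneg (exp_pos t).le (hg' t ht)

theorem min_zero_le_of_add_deriv_nonneg {T : ℝ} {g g' : ℝ → ℝ}
    (hg : ∀ t ∈ Ico 0 T, HasDerivWithinAt g (g' t) (Ico 0 T) t)
    (hg' : ∀ t ∈ Ioo 0 T, 0 ≤ g t + g' t) {t : ℝ} (ht : t ∈ Ico 0 T) :
    min 0 (g 0) ≤ g t := by
  have hmono : exp 0 * g 0 ≤ exp t * g t :=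
    monotoneOn_exp_mul_of_add_deriv_nonneg (convex_Ico 0 T) hg (by rwa [interior_Ico])
      ⟨le_rfl, ht.1.trans_lt ht.2⟩ ht ht.1
  rw [exp_zero, one_mul] at hmono
  rcases le_or_gt 0 (g t) with hpos | hneg
  · exact (min_le_left _ _).trans hpos
  · exact (min_le_right _ _).trans (hmono.trans (mul_le_of_one_le_left hneg.le (one_le_exp ht.1)))

theorem hasDerivAt_negMulLog_const_sub {T t : ℝ} (ht : t < T) :
    HasDerivAt (fun s => negMulLog (T - s)) (log (T - t) + 1) t :=
  ((hasDerivAt_negMulLog (sub_pos.2 ht).ne').comp t ((hasDerivAt_id t).const_sub T)).congr_deriv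
    (by ring)

theorem min_zero_negMulLog_le {T x : ℝ} (hx : x ∈ Icc 0 T) : min 0 (negMulLog T) ≤ negMulLog x := by
  simpa using concaveOn_negMulLog.min_le_of_mem_Icc self_mem_Ici (hx.1.trans hx.2) hx

theorem gronwall_log_forcing_with_damping_general
    (T : ℝ) (a C : ℝ) (ha : 0 ≤ a) (f f' : ℝ → ℝ)
    (hderiv : ∀ t ∈ Set.Ico (0 : ℝ) T, HasDerivWithinAt f (f' t) (Set.Ico 0 T) t)
    (hineq : ∀ t ∈ Set.Ico (0 : ℝ) T, a * Real.log (T - t) - C - f t ≤ f' t) :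
    ∃ C' : ℝ, ∀ t ∈ Set.Ico (0 : ℝ) T, -C' ≤ f t := by
  set g : ℝ → ℝ := fun t => f t - a * negMulLog (T - t) + C + 2 * a
  have hg : ∀ t ∈ Ico 0 T, HasDerivWithinAt g (f' t - a * (log (T - t) + 1)) (Ico 0 T) t :=
    fun t ht => (((hderiv t ht).sub
      ((hasDerivAt_negMulLog_const_sub ht.2).const_mul a).hasDerivWithinAt).add_const C).add_const _
  have hg' : ∀ t ∈ Ioo 0 T, 0 ≤ g t + (f' t - a * (log (T - t) + 1)) := by
    intro t ht
    have hle_one : negMulLog (T - t) ≤ 1 :=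
      (negMulLog_le_one_sub_self (sub_pos.2 ht.2).le).trans (by linarith [ht.2])
    linarith [mul_le_mul_of_nonneg_left hle_one ha, hineq t (Ioo_subset_Ico_self ht)]
  refine ⟨-(a * min 0 (negMulLog T) - C - 2 * a + min 0 (g 0)), fun t ht => ?_⟩
  have hbarrier : a * min 0 (negMulLog T) ≤ a * negMulLog (T - t) :=
    mul_le_mul_of_nonneg_left (min_zero_negMulLog_le ⟨by linarith [ht.2], by linarith [ht.1]⟩) ha
  linarith [min_zero_le_of_add_deriv_nonneg hg hg' ht]

/-- If `0 < T < ∞`, `a ≥ 0`, and `f` is differentiable on `[0, T)` with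
`f'(t) ≥ a·log(T - t) - C - f(t)`, then `f` is bounded below on `[0, T)` by a constant. -/
theorem gronwall_log_forcing_with_damping
    (T : ℝ) (hT : 0 < T) (a C : ℝ) (ha : 0 ≤ a) (f f' : ℝ → ℝ)
    (hderiv : ∀ t ∈ Set.Ico (0 : ℝ) T, HasDerivWithinAt f (f' t) (Set.Ico 0 T) t)
    (hineq : ∀ t ∈ Set.Ico (0 : ℝ) T, a * Real.log (T - t) - C - f t ≤ f' t) :
    ∃ C' : ℝ, ∀ t ∈ Set.Ico (0 : ℝ) T, -C' ≤ f t :=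
  gronwall_log_forcing_with_damping_general T a C ha f f' hderiv hineq
end

section
/- Let X be a nonempty compact topological space, let u : ℝ × X → ℝ be continuous, and suppose there is a continuous function v : ℝ × X → ℝ such that for each x ∈ X, the map t ↦ u(t, x) is differentiable with derivative v(t, x). Define U(t) = min_{x ∈ X} u(t, x). Let t₁ ≤ t₂ and let g : ℝ → ℝ be continuous such that for every t ∈ [t₁, t₂] and every x ∈ X attaining the minimum u(t, x) = U(t), one has v(t, x) ≥ g(t). Then U(t₂) - U(t₁) ≥ ∫_{t₁}^{t₂} g(s) ds. In particular, U is locally Lipschitz. -/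
/-! Choose minimizers `m t` of `u(t, ·)`, so that `U t = u(t, m t)`. For `s > t`, comparing with
the frozen minimizer `m s` gives `U s - U t ≥ u(s, m s) - u(t, m s)`, which the mean value theorem
bounds below by `c (s - t)` as soon as `v > c` on `[t, s] × {m s}`. By compactness the `m s` cluster,
as `s ↓ t`, at a minimizer `x₀` of `u(t, ·)`, where `v(t, x₀) ≥ g t`; by continuity of `v` the lower
right Dini derivative of `U` is therefore at least `g`, and a fencing argument integrates this.
Comparing with frozen minimizers in both directions also shows that `U` is Lipschitz on `[a, b]`
with the bound of `|v|` on the compact set `[a, b] × X` as constant. -/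

open Set Filter Topology

theorem integral_le_sub_of_frequently_le_slope {f g : ℝ → ℝ} {a b : ℝ} (hab : a ≤ b)
    (hf : ContinuousOn f (Icc a b)) (hg : Continuous g)
    (hslope : ∀ t ∈ Ico a b, ∀ c < g t, ∃ᶠ s in 𝓝[>] t, c ≤ slope f t s) :
    ∫ s in a..b, g s ≤ f b - f a := by
  have hG (t : ℝ) : HasDerivAt (fun t => -f a - ∫ s in a..t, g s) (-g t) t :=
    (hg.integral_hasStrictDerivAt a t).hasDerivAt.const_sub _
  have hfence := image_le_of_liminf_slope_right_le_deriv_boundary hf.neg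
    (by simp) (fun t _ => (hG t).continuousAt.continuousWithinAt)
    (fun t _ => (hG t).hasDerivWithinAt) fun t ht r hr => by
      obtain ⟨c, hrc, hcg⟩ := exists_between (neg_lt.1 hr)
      refine (hslope t ht c hcg).mono fun s hs => ?_
      simp only [slope_neg_fun, Pi.neg_apply]
      linarith
  linarith [hfence (right_mem_Icc.2 hab), Pi.neg_apply f b]

theorem lipschitzOnWith_apply_of_isMinOn {α ι : Type*} [PseudoMetricSpace α] {f : α → ι → ℝ}
    {m : α → ι} (hm : ∀ a, IsMinOn (f a) univ (m a)) {K : NNReal} {s : Set α}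
    (hf : ∀ i, LipschitzOnWith K (f · i) s) : LipschitzOnWith K (fun a => f a (m a)) s :=
  LipschitzOnWith.of_le_add_mul K fun a ha b hb =>
    (hm a (mem_univ (m b))).trans ((hf (m b)).le_add_mul ha hb)

theorem le_slope_apply_of_isMinOn {X : Type*} {u v : ℝ × X → ℝ}
    (hderiv : ∀ x t, HasDerivAt (fun s => u (s, x)) (v (t, x)) t) {m : ℝ → X} {t s c : ℝ}
    (hm : IsMinOn (fun x => u (t, x)) univ (m t)) (hts : t < s)
    (hv : ∀ ξ ∈ Icc t s, c ≤ v (ξ, m s)) : c ≤ slope (fun s => u (s, m s)) t s := by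
  have hmvt : c * (s - t) ≤ u (s, m s) - u (t, m s) :=
    (convex_Icc t s).mul_sub_le_image_sub_of_le_deriv
      (fun ξ _ => (hderiv (m s) ξ).continuousAt.continuousWithinAt)
      (fun ξ _ => (hderiv (m s) ξ).differentiableAt.differentiableWithinAt)
      (fun ξ hξ => (hderiv (m s) ξ).deriv ▸ hv ξ (interior_subset hξ))
      t (left_mem_Icc.2 hts.le) s (right_mem_Icc.2 hts.le) hts.le
  have hmin : u (t, m t) ≤ u (t, m s) := hm (mem_univ (m s))
  rw [slope_def_field, le_div_iff₀ (sub_pos.2 hts)]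
  linarith

theorem exists_isMinOn_mapClusterPt_of_isMinOn {α X : Type*} [TopologicalSpace α]
    [TopologicalSpace X] [CompactSpace X]
    {u : α × X → ℝ} (hu : Continuous u) {m : α → X}
    (hm : ∀ a, IsMinOn (fun x => u (a, x)) univ (m a)) {l : Filter α} [l.NeBot] {a : α}
    (hl : l ≤ 𝓝 a) :
    ∃ x₀, IsMinOn (fun x => u (a, x)) univ x₀ ∧ MapClusterPt (a, x₀) l fun b => (b, m b) := by
  obtain ⟨x₀, -, hx₀⟩ := isCompact_univ.ultrafilter_le_nhds (Ultrafilter.of l |>.map m)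
    (le_principal_iff.2 univ_mem)
  have hlim : Tendsto (fun b => (b, m b)) (Ultrafilter.of l) (𝓝 (a, x₀)) :=
    (tendsto_id'.2 ((Ultrafilter.of_le l).trans hl)).prodMk_nhds hx₀
  refine ⟨x₀, fun y _ => ?_, mapClusterPt_iff_ultrafilter.2 ⟨_, Ultrafilter.of_le l, hlim⟩⟩
  have hclosed : IsClosed {p : α × X | u p ≤ u (p.1, y)} :=
    isClosed_le hu (hu.comp (continuous_fst.prodMk continuous_const))
  exact hclosed.mem_of_tendsto hlim (Eventually.of_forall fun b => hm b (mem_univ y))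

section TimeDependent

variable {X : Type*} [TopologicalSpace X] {u v : ℝ × X → ℝ}

theorem exists_lipschitzOnWith_of_hasDerivAt [CompactSpace X] (hv : Continuous v)
    (hderiv : ∀ x t, HasDerivAt (fun s => u (s, x)) (v (t, x)) t) {a b : ℝ} :
    ∃ K, ∀ x, LipschitzOnWith K (fun s => u (s, x)) (Icc a b) := by
  obtain ⟨K, hK⟩ := (isCompact_Icc.prod isCompact_univ).bddAbove_image
    (f := fun p => ‖v p‖₊) hv.nnnorm.continuousOn
  exact ⟨K, fun x => (convex_Icc a b).lipschitzOnWith_of_nnnorm_hasDerivWithin_le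
    (fun t _ => (hderiv x t).hasDerivWithinAt)
    fun t ht => hK ⟨(t, x), ⟨ht, mem_univ x⟩, rfl⟩⟩

theorem locallyLipschitz_apply_of_isMinOn [CompactSpace X] (hv : Continuous v)
    (hderiv : ∀ x t, HasDerivAt (fun s => u (s, x)) (v (t, x)) t) {m : ℝ → X}
    (hm : ∀ t, IsMinOn (fun x => u (t, x)) univ (m t)) :
    LocallyLipschitz fun t => u (t, m t) := by
  intro t
  obtain ⟨K, hK⟩ := exists_lipschitzOnWith_of_hasDerivAt hv hderiv (a := t - 1) (b := t + 1)
  exact ⟨K, Icc (t - 1) (t + 1), Icc_mem_nhds (by linarith) (by linarith),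
    lipschitzOnWith_apply_of_isMinOn (f := fun s x => u (s, x)) hm hK⟩

theorem eventually_forall_Icc_lt_of_lt (hv : Continuous v) {t c : ℝ} {x₀ : X}
    (h : c < v (t, x₀)) : ∀ᶠ p in 𝓝 (t, x₀), ∀ ξ ∈ Icc t p.1, c < v (ξ, p.2) := by
  have hW : v ⁻¹' Ioi c ∈ 𝓝 (t, x₀) := (isOpen_Ioi.preimage hv).mem_nhds h
  rw [nhds_prod_eq] at hW ⊢
  obtain ⟨A, hA, N, hN, hAN⟩ := mem_prod_iff.1 hW
  obtain ⟨l, r, ⟨hlt, htr⟩, hlr⟩ := mem_nhds_iff_exists_Ioo_subset.1 hA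
  filter_upwards [prod_mem_prod (Iio_mem_nhds htr) hN] with p hp ξ hξ
  exact hAN ⟨hlr ⟨hlt.trans_le hξ.1, hξ.2.trans_lt hp.1⟩, hp.2⟩

theorem frequently_le_slope_apply_of_isMinOn [CompactSpace X] (hu : Continuous u)
    (hv : Continuous v) (hderiv : ∀ x t, HasDerivAt (fun s => u (s, x)) (v (t, x)) t)
    {m : ℝ → X} (hm : ∀ t, IsMinOn (fun x => u (t, x)) univ (m t)) {t c : ℝ}
    (hc : ∀ x, IsMinOn (fun x => u (t, x)) univ x → c < v (t, x)) :
    ∃ᶠ s in 𝓝[>] t, c ≤ slope (fun s => u (s, m s)) t s := by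
  obtain ⟨x₀, hx₀, hcluster⟩ :=
    exists_isMinOn_mapClusterPt_of_isMinOn hu hm (nhdsWithin_le_nhds (a := t) (s := Ioi t))
  refine ((hcluster.frequently (eventually_forall_Icc_lt_of_lt hv (hc x₀ hx₀))).and_eventually
    self_mem_nhdsWithin).mono fun s ⟨hvs, hts⟩ => ?_
  exact le_slope_apply_of_isMinOn hderiv (hm t) hts fun ξ hξ => (hvs ξ hξ).le

end TimeDependent

/-- Hamilton's trick: Let `X` be a nonempty compact space, `u : ℝ × X → ℝ`
continuous with continuous time-derivative `v`. Let `U(t) = min_x u(t, x)`. If `t₁ ≤ t₂`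
and `g` is continuous with `v(t, x) ≥ g(t)` whenever `t ∈ [t₁, t₂]` and `x` attains the
minimum of `u(t, ·)`, then `U(t₂) - U(t₁) ≥ ∫_{t₁}^{t₂} g`. In particular `U` is locally
Lipschitz. -/
theorem hamilton_trick_min
    {X : Type*} [TopologicalSpace X] [CompactSpace X] [Nonempty X]
    (u v : ℝ × X → ℝ) (hu : Continuous u) (hv : Continuous v)
    (hderiv : ∀ x : X, ∀ t : ℝ, HasDerivAt (fun s => u (s, x)) (v (t, x)) t)
    (U : ℝ → ℝ) (hU : ∀ t, U t = ⨅ x : X, u (t, x)) :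
    (∀ t₁ t₂ : ℝ, t₁ ≤ t₂ → ∀ g : ℝ → ℝ, Continuous g →
        (∀ t ∈ Set.Icc t₁ t₂, ∀ x : X, u (t, x) = U t → g t ≤ v (t, x)) →
        ∫ s in t₁..t₂, g s ≤ U t₂ - U t₁) ∧
    LocallyLipschitz U := by
  have hmin (t : ℝ) : ∃ x, IsMinOn (fun x => u (t, x)) univ x :=
    let ⟨x, _, hx⟩ := isCompact_univ.exists_isMinOn univ_nonempty
      (hu.comp (continuous_const.prodMk continuous_id)).continuousOn
    ⟨x, hx⟩
  choose m hm using hmin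
  have hUm : U = fun t => u (t, m t) := funext fun t =>
    (hU t).trans <| ciInf_eq_of_forall_ge_of_forall_gt_exists_lt (fun x => hm t (mem_univ x))
      fun _ hw => ⟨m t, hw⟩
  have hLip : LocallyLipschitz U := hUm ▸ locallyLipschitz_apply_of_isMinOn hv hderiv hm
  refine ⟨fun t₁ t₂ h12 g hg hbound => ?_, hLip⟩
  refine integral_le_sub_of_frequently_le_slope h12 hLip.continuous.continuousOn hg
    fun t ht c hc => hUm ▸ frequently_le_slope_apply_of_isMinOn hu hv hderiv hm fun x hx => ?_
  refine hc.trans_le (hbound t (Ico_subset_Icc_self ht) x ?_)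
  exact hUm ▸ le_antisymm (hx (mem_univ (m t))) (hm t (mem_univ x))
end
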